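/- arXiv:2107.01169 — 2 statements merged into one kernel-verified Lean document; each statement's English description precedes it below -/
import Mathlib

section
/- Let n and n' be integers with 1 ≤ n' ≤ n, and set s = 2^{n+n'} − 2^n + 2^{n'}. Then for every integer k with 2 ≤ k ≤ 2^n + 2 there exists a k-server PIR [m,s]-code with m = s + (k−1)·s/2^{n'}. -/
/-
Denniston's maximal arc. Over `F = GF(2^n)` pick `b` with `X^2 + X + b` irreducible, so that
`Q(x, y) = x^2 + xy + by^2` is anisotropic, and an additive subgroup `H ≤ F` of order `2^n'`.
The arc is `A = {v ∈ F² | Q v ∈ H}`. Along the line `p + t d` through `p ∈ A`, `Q(p + t d) - Q(p)`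
is an additive function `L` of `t` (we are in characteristic 2), so the line meets `A` in the
`|L⁻¹(H)|` points; `L` is either bijective or has a kernel of order 2 whose image misses `Q(p)`, and
in both cases `H + L(F) = F` forces `|L⁻¹(H)| = |H|`. The pencil of `q + 1` lines through `0` then
gives `|A| = (q + 1)(|H| - 1) + 1 = s`, and each parallel class of lines cuts `A` into `s / |H|`
blocks. Two lines of different classes meet in at most one point, so the systematic generator
`[I | N]`, with `N` the incidence matrix of `A` against the blocks of `k - 1` parallel classes,
lets a point be recovered from itself and, for each class, from its block together with the other
points of that block.
-/

/-- `G` is the generator matrix of a `k`-server PIR `[m,s]`-code. -/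
def IsPIRMatrix (s m k : ℕ) (G : Matrix (Fin s) (Fin m) (ZMod 2)) : Prop :=
  ∀ i : Fin s, ∃ R : Fin k → Finset (Fin m),
    (Pairwise fun a b => Disjoint (R a) (R b)) ∧
    ∀ a : Fin k, (∑ j ∈ R a, fun r => G r j) = Pi.single i (1 : ZMod 2)

/-- There exists a `k`-server PIR `[m,s]`-code. -/
def ExistsPIRCode (s m k : ℕ) : Prop :=
  ∃ G : Matrix (Fin s) (Fin m) (ZMod 2), IsPIRMatrix s m k G

open Finset

section RecoverySets

variable {ρ ι : Type*} [DecidableEq ρ]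

def HasRecoverySets (κ : Type*) (G : Matrix ρ ι (ZMod 2)) : Prop :=
  ∀ i : ρ, ∃ R : κ → Finset ι, (Pairwise fun a b => Disjoint (R a) (R b)) ∧
    ∀ a, (∑ j ∈ R a, fun r => G r j) = Pi.single i 1

theorem existsPIRCode_of_hasRecoverySets {κ : Type*} [Fintype ρ] [Fintype ι] [Fintype κ]
    {G : Matrix ρ ι (ZMod 2)} (hG : HasRecoverySets κ G) :
    ExistsPIRCode (Fintype.card ρ) (Fintype.card ι) (Fintype.card κ) := by
  let eρ := Fintype.equivFin ρ
  let eι := Fintype.equivFin ι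
  let eκ := Fintype.equivFin κ
  refine ⟨G.reindex eρ eι, fun i => ?_⟩
  obtain ⟨R, hdisj, hsum⟩ := hG (eρ.symm i)
  refine ⟨fun a => (R (eκ.symm a)).map eι.toEmbedding,
    fun a b hab => (disjoint_map _).mpr (hdisj (eκ.symm.injective.ne hab)), fun a => ?_⟩
  ext r
  have := congrFun (hsum (eκ.symm a)) (eρ.symm r)
  simp only [sum_map, Finset.sum_apply, Matrix.reindex_apply] at this ⊢
  simpa [Pi.single_apply, eρ.symm.injective.eq_iff] using this

end RecoverySets

section IncidenceGenerator

variable {P κ β : Type*} [Fintype P] [DecidableEq P] [DecidableEq κ] [DecidableEq β]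
  (line : κ → P → β)

/- The blocks of the `c`-th parallel class are the nonempty fibres of `line c`; besides one column
per point, the generator has one column per block, its incidence vector. -/
abbrev IncidenceColumns := P ⊕ Σ c, (univ.image (line c) : Finset β)

def incidenceGenerator : Matrix P (IncidenceColumns line) (ZMod 2) :=
  fun p => Sum.elim (fun q => if p = q then 1 else 0) fun w => if line w.1 p = w.2 then 1 else 0

def recoverySet (p : P) : Option κ → Finset (IncidenceColumns line)
  | none => {.inl p}
  | some c => insert (Sum.inr ⟨c, line c p, mem_image_of_mem _ (mem_univ p)⟩)
      (({q | line c q = line c p ∧ q ≠ p} : Finset P).map Function.Embedding.inl)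

theorem hasRecoverySets_incidenceGenerator
    (hline : Pairwise fun c c' => Function.Injective fun p => (line c p, line c' p)) :
    HasRecoverySets (Option κ) (incidenceGenerator line) := by
  intro p
  refine ⟨recoverySet line p, ?_, ?_⟩
  · rintro (_ | c) (_ | c') hcc'
    · exact absurd rfl hcc'
    · simp [recoverySet]
    · simp [recoverySet]
    · have hne : c ≠ c' := fun h => hcc' (congrArg some h)
      rw [disjoint_left]
      rintro (q | ⟨c'', w⟩) hq hq'
      · simp only [recoverySet, mem_insert, reduceCtorEq, mem_map, mem_filter, mem_univ, true_and,
          Function.Embedding.inl_apply, Sum.inl.injEq, exists_eq_right, false_or] at hq hq'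
        exact hq.2 (hline hne (Prod.ext hq.1 hq'.1))
      · simp only [recoverySet, mem_insert, Sum.inr.injEq, Sigma.mk.injEq, mem_map,
          Function.Embedding.inl_apply, reduceCtorEq, and_false, exists_false, or_false] at hq hq'
        exact hne (hq.1.symm.trans hq'.1)
  · rintro (_ | c) <;> ext r
    · simp [recoverySet, incidenceGenerator, Pi.single_apply, eq_comm]
    · simp only [recoverySet, incidenceGenerator, Finset.sum_apply, mem_map, mem_filter, mem_univ,
        true_and, ne_eq, Function.Embedding.inl_apply, reduceCtorEq, and_false, exists_false,
        not_false_eq_true, sum_insert, Sum.elim_inr, sum_map, Sum.elim_inl, sum_ite_eq,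
        Pi.single_apply, eq_comm]
      by_cases hpr : p = r
      · simp [hpr]
      · by_cases hl : line c p = line c r
        · simp only [hpr, hl]; decide
        · simp [hpr, hl]

end IncidenceGenerator

namespace AddSubgroup

variable {G G' : Type*} [AddGroup G] [AddGroup G']

theorem index_comap_of_sup_range_eq_top (f : G →+ G') (H : AddSubgroup G') [H.Normal]
    (h : H ⊔ f.range = ⊤) : (H.comap f).index = H.index := by
  rw [index_comap, ← relIndex_sup_left, h, relIndex_top_right]

theorem sup_eq_top_of_index_eq_two {H K : AddSubgroup G} (hK : K.index = 2) (hHK : ¬H ≤ K) :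
    H ⊔ K = ⊤ := by
  obtain ⟨x, hxH, hxK⟩ := SetLike.not_le_iff_exists.mp hHK
  refine eq_top_iff.mpr fun y _ => ?_
  by_cases hy : y ∈ K
  · exact mem_sup_right hy
  · have hyx : y + x ∈ K := (add_mem_iff_of_index_two hK).mpr (iff_of_false hy hxK)
    simpa using sub_mem (mem_sup_right hyx) (mem_sup_left hxH)

theorem exists_card_eq_pow_prime [Finite G] (p : ℕ) {n : ℕ} [Fact p.Prime]
    (h : p ^ n ∣ Nat.card G) : ∃ H : AddSubgroup G, Nat.card H = p ^ n := by
  obtain ⟨K, hK⟩ := Sylow.exists_subgroup_card_pow_prime (G := Multiplicative G) p h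
  exact ⟨AddSubgroup.toSubgroup.symm K, hK⟩

end AddSubgroup

section Plane

variable {K : Type*} [Field K]

def cross (d v : K × K) : K := d.1 * v.2 - d.2 * v.1

theorem cross_add_smul (d p : K × K) (t : K) : cross d (p + t • d) = cross d p := by
  simp only [cross, Prod.fst_add, Prod.snd_add, Prod.smul_fst, Prod.smul_snd, smul_eq_mul]; ring

theorem cross_eq_cross_iff {d p v : K × K} (hd : d ≠ 0) :
    cross d v = cross d p ↔ ∃ t : K, v = p + t • d := by
  refine ⟨fun h => ?_, by rintro ⟨t, rfl⟩; exact cross_add_smul d p t⟩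
  obtain ⟨d₁, d₂⟩ := d
  obtain ⟨p₁, p₂⟩ := p
  obtain ⟨v₁, v₂⟩ := v
  simp only [cross] at h
  by_cases hd₁ : d₁ = 0
  · have hd₂ : d₂ ≠ 0 := fun h => hd (by simp [hd₁, h])
    subst hd₁
    refine ⟨(v₂ - p₂) / d₂, Prod.ext ?_ ?_⟩
    · simp only [Prod.fst_add, Prod.smul_fst, smul_eq_mul, mul_zero, add_zero]
      exact mul_left_cancel₀ (neg_ne_zero.mpr hd₂) (by linear_combination h)
    · simp only [Prod.snd_add, Prod.smul_snd, smul_eq_mul]; field_simp; ring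
  · refine ⟨(v₁ - p₁) / d₁, Prod.ext ?_ ?_⟩
    · simp only [Prod.fst_add, Prod.smul_fst, smul_eq_mul]; field_simp; ring
    · simp only [Prod.snd_add, Prod.smul_snd, smul_eq_mul]; field_simp; linear_combination h

theorem eq_of_cross_eq_of_cross_eq {d d' v w : K × K} (hdd' : cross d d' ≠ 0)
    (h : cross d v = cross d w) (h' : cross d' v = cross d' w) : v = w := by
  simp only [cross] at h h' hdd'
  refine Prod.ext ?_ ?_
  · refine sub_eq_zero.mp ((mul_eq_zero.mp ?_).resolve_left hdd')
    linear_combination d'.1 * h - d.1 * h'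
  · refine sub_eq_zero.mp ((mul_eq_zero.mp ?_).resolve_left hdd')
    linear_combination d'.2 * h - d.2 * h'

def direction : Option K → K × K
  | none => (0, 1)
  | some x => (1, x)

theorem direction_ne_zero (o : Option K) : direction o ≠ 0 := by
  cases o <;> simp [direction]

theorem cross_direction_ne_zero {o o' : Option K} (h : o ≠ o') :
    cross (direction o) (direction o') ≠ 0 := by
  rcases o with _ | x <;> rcases o' with _ | x' <;>
    simp_all [direction, cross, sub_eq_zero, eq_comm]

theorem exists_cross_direction_eq_zero (v : K × K) : ∃ o, cross (direction o) v = 0 := by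
  by_cases hv : v.1 = 0
  · exact ⟨none, by simp [direction, cross, hv]⟩
  · exact ⟨some (v.2 / v.1), by simp [direction, cross]; field_simp; ring⟩

end Plane

theorem exists_forall_sq_add_ne {F : Type*} [Field F] [Finite F] :
    ∃ b : F, ∀ u, u ^ 2 + u ≠ b := by
  by_contra! h
  have hinj : Function.Injective fun u : F => u ^ 2 + u := Finite.injective_iff_surjective.mpr h
  exact neg_ne_zero.mpr one_ne_zero (hinj (by ring) : (0 : F) = -1).symm

namespace Denniston

variable {F : Type*} [Field F]

def quadForm (b : F) (v : F × F) : F := v.1 ^ 2 + v.1 * v.2 + b * v.2 ^ 2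

def polar (p d : F × F) : F := p.1 * d.2 + p.2 * d.1

open scoped Classical in
noncomputable def arc [Fintype F] (b : F) (H : AddSubgroup F) : Finset (F × F) :=
  {v | quadForm b v ∈ H}

@[simp]
theorem mem_arc [Fintype F] {b : F} {H : AddSubgroup F} {v : F × F} :
    v ∈ arc b H ↔ quadForm b v ∈ H := by
  simp [arc]

variable [CharP F 2] (b : F)

def quadFormAlong (p d : F × F) : F →+ F where
  toFun t := polar p d * t + quadForm b d * t ^ 2
  map_zero' := by simp
  map_add' t t' := by simp only [CharTwo.add_sq]; ring

theorem quadFormAlong_apply (p d : F × F) (t : F) :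
    quadFormAlong b p d t = polar p d * t + quadForm b d * t ^ 2 := rfl

theorem quadForm_add_smul (p d : F × F) (t : F) :
    quadForm b (p + t • d) = quadForm b p + quadFormAlong b p d t := by
  simp only [quadFormAlong_apply, quadForm, polar, Prod.fst_add, Prod.snd_add, Prod.smul_fst,
    Prod.smul_snd, smul_eq_mul, CharTwo.add_sq]
  ring

variable {b}

theorem quadForm_eq_zero_iff (hb : ∀ u : F, u ^ 2 + u ≠ b) {v : F × F} :
    quadForm b v = 0 ↔ v = 0 := by
  refine ⟨fun h => ?_, by rintro rfl; simp [quadForm]⟩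
  obtain ⟨x, y⟩ := v
  simp only [quadForm] at h
  by_cases hy : y = 0
  · subst hy
    simpa using h
  · refine absurd ?_ (hb (x / y))
    rw [← CharTwo.add_eq_zero]
    refine (mul_eq_zero.mp ?_).resolve_right (pow_ne_zero 2 hy)
    field_simp
    linear_combination h

theorem quadForm_ne_zero (hb : ∀ u : F, u ^ 2 + u ≠ b) {v : F × F} (hv : v ≠ 0) :
    quadForm b v ≠ 0 :=
  (quadForm_eq_zero_iff hb).not.mpr hv

theorem surjective_quadFormAlong [Finite F] {p d : F × F} (h : polar p d = 0)
    (hd : quadForm b d ≠ 0) : Function.Surjective (quadFormAlong b p d) := by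
  refine Finite.injective_iff_surjective.mp fun t t' htt' => ?_
  simp only [quadFormAlong_apply, h, zero_mul, zero_add] at htt'
  exact CharTwo.sq_injective (mul_left_cancel₀ hd htt')

theorem index_range_quadFormAlong [Finite F] {p d : F × F} (h : polar p d ≠ 0)
    (hd : quadForm b d ≠ 0) : (quadFormAlong b p d).range.index = 2 := by
  have hker : ((quadFormAlong b p d).ker : Set F) = {0, polar p d / quadForm b d} := by
    ext t
    simp only [SetLike.mem_coe, AddMonoidHom.mem_ker, quadFormAlong_apply, Set.mem_insert_iff,
      Set.mem_singleton_iff]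
    rw [eq_div_iff hd,
      show polar p d * t + quadForm b d * t ^ 2 = t * (polar p d + t * quadForm b d) by ring,
      mul_eq_zero, CharTwo.add_eq_zero, eq_comm (a := polar p d)]
  rw [AddSubgroup.index_range, ← SetLike.coe_sort_coe, Nat.card_coe_set_eq, hker,
    Set.ncard_pair (div_ne_zero h hd).symm]

theorem quadForm_notMem_range_quadFormAlong (hb : ∀ u : F, u ^ 2 + u ≠ b) {p d : F × F}
    (h : polar p d ≠ 0) : quadForm b p ∉ (quadFormAlong b p d).range := by
  rintro ⟨t, ht⟩
  have hpt : p + t • d = 0 := by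
    rw [← quadForm_eq_zero_iff hb, quadForm_add_smul, ht, CharTwo.add_self_eq_zero]
  have hp : p = t • d := by rw [← CharTwo.neg_eq (t • d)]; exact eq_neg_of_add_eq_zero_left hpt
  apply h
  simp only [hp, polar, Prod.smul_fst, Prod.smul_snd, smul_eq_mul]
  linear_combination t * d.1 * d.2 * CharTwo.two_eq_zero (R := F)

theorem sup_range_quadFormAlong_eq_top [Finite F] (hb : ∀ u : F, u ^ 2 + u ≠ b)
    {H : AddSubgroup F} {p d : F × F} (hp : quadForm b p ∈ H) (hd : d ≠ 0) :
    H ⊔ (quadFormAlong b p d).range = ⊤ := by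
  by_cases h : polar p d = 0
  · rw [AddMonoidHom.range_eq_top.mpr (surjective_quadFormAlong h (quadForm_ne_zero hb hd)),
      sup_top_eq]
  · exact AddSubgroup.sup_eq_top_of_index_eq_two
      (index_range_quadFormAlong h (quadForm_ne_zero hb hd))
      fun hle => quadForm_notMem_range_quadFormAlong hb h (hle hp)

open scoped Classical in
theorem card_filter_quadForm_add_smul_mem [Fintype F] (hb : ∀ u : F, u ^ 2 + u ≠ b)
    {H : AddSubgroup F} {p d : F × F} (hp : quadForm b p ∈ H) (hd : d ≠ 0) :
    #{t : F | quadForm b (p + t • d) ∈ H} = Nat.card H := by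
  have hindex := AddSubgroup.index_comap_of_sup_range_eq_top _ H
    (sup_range_quadFormAlong_eq_top hb hp hd)
  have hcard := (H.comap (quadFormAlong b p d)).card_mul_index
  rw [hindex, ← H.card_mul_index] at hcard
  simp only [quadForm_add_smul, H.add_mem_cancel_left hp]
  rw [← Nat.eq_of_mul_eq_mul_right (Nat.pos_of_ne_zero H.index_ne_zero_of_finite) hcard,
    Nat.card_eq_fintype_card, Fintype.card_subtype]
  rfl

section Arc

open scoped Classical

variable [Fintype F] {H : AddSubgroup F}

theorem card_filter_cross_eq (hb : ∀ u : F, u ^ 2 + u ≠ b) {p d : F × F} (hp : p ∈ arc b H)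
    (hd : d ≠ 0) : #{v ∈ arc b H | cross d v = cross d p} = Nat.card H := by
  have hline : {v ∈ arc b H | cross d v = cross d p} =
      image (fun t => p + t • d) {t : F | quadForm b (p + t • d) ∈ H} := by
    ext v
    simp only [mem_filter, mem_arc, cross_eq_cross_iff hd, mem_image, mem_univ, true_and]
    constructor
    · rintro ⟨hv, t, rfl⟩
      exact ⟨t, hv, rfl⟩
    · rintro ⟨t, ht, rfl⟩
      exact ⟨ht, t, rfl⟩
  rw [hline, card_image_of_injective _ fun t t' h => smul_left_injective F hd (add_left_cancel h),
    card_filter_quadForm_add_smul_mem hb (mem_arc.mp hp) hd]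

theorem card_image_cross_arc_mul (hb : ∀ u : F, u ^ 2 + u ≠ b) {d : F × F} (hd : d ≠ 0) :
    #((arc b H).image (cross d)) * Nat.card H = #(arc b H) := by
  rw [card_eq_sum_card_image (cross d) (arc b H)]
  refine (sum_const_nat fun w hw => ?_).symm
  obtain ⟨p, hp, rfl⟩ := mem_image.mp hw
  exact card_filter_cross_eq hb hp hd

theorem card_arc (hb : ∀ u : F, u ^ 2 + u ≠ b) :
    #(arc b H) = (Fintype.card F + 1) * (Nat.card H - 1) + 1 := by
  have h0 : (0 : F × F) ∈ arc b H := by simp [quadForm]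
  let pencil (o : Option F) := {v ∈ arc b H | cross (direction o) v = cross (direction o) 0}
  have hpencil : (arc b H).erase 0 = univ.biUnion fun o => (pencil o).erase 0 := by
    ext v
    simp only [mem_erase, mem_biUnion, mem_univ, true_and, pencil, mem_filter]
    constructor
    · rintro ⟨hv, hvA⟩
      obtain ⟨o, ho⟩ := exists_cross_direction_eq_zero v
      exact ⟨o, hv, hvA, by simpa [cross] using ho⟩
    · rintro ⟨o, hv, hvA, -⟩
      exact ⟨hv, hvA⟩
  have hdisj : ((univ : Finset (Option F)) : Set (Option F)).PairwiseDisjoint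
      fun o => (pencil o).erase 0 := by
    intro o _ o' _ hoo'
    simp only [Function.onFun, disjoint_left, mem_erase, pencil, mem_filter]
    rintro v ⟨hv, -, ho⟩ ⟨-, -, ho'⟩
    exact hv (eq_of_cross_eq_of_cross_eq (cross_direction_ne_zero hoo') ho ho')
  rw [← card_erase_add_one h0, hpencil, card_biUnion hdisj]
  simp only [card_erase_of_mem (show (0 : F × F) ∈ pencil _ by simp [pencil, h0]),
    pencil, card_filter_cross_eq hb h0 (direction_ne_zero _), sum_const, card_univ,
    Fintype.card_option, smul_eq_mul]

theorem existsPIRCode_arc (hb : ∀ u : F, u ^ 2 + u ≠ b) (H : AddSubgroup F) {k : ℕ}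
    (hk : k ≤ Fintype.card F + 1) :
    ExistsPIRCode #(arc b H) (#(arc b H) + k * (#(arc b H) / Nat.card H)) (k + 1) := by
  obtain ⟨e⟩ : Nonempty (Fin k ↪ Option F) :=
    Function.Embedding.nonempty_of_card_le (by simpa using hk)
  let line (c : Fin k) (v : arc b H) : F := cross (direction (e c)) v
  have hline : Pairwise fun c c' => Function.Injective fun v => (line c v, line c' v) :=
    fun c c' hcc' v w hvw => Subtype.ext <| eq_of_cross_eq_of_cross_eq
      (cross_direction_ne_zero (e.injective.ne hcc')) (congrArg Prod.fst hvw)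
      (congrArg Prod.snd hvw)
  have hblocks (c : Fin k) : #(univ.image (line c)) = #(arc b H) / Nat.card H := by
    have himage : univ.image (line c) = (arc b H).image (cross (direction (e c))) := by
      rw [univ_eq_attach, show line c = cross (direction (e c)) ∘ Subtype.val from rfl,
        ← image_image, attach_image_val]
    rw [himage, ← card_image_cross_arc_mul hb (direction_ne_zero (e c)),
      Nat.mul_div_cancel _ Nat.card_pos]
  have hcode := existsPIRCode_of_hasRecoverySets (hasRecoverySets_incidenceGenerator line hline)
  simp only [Fintype.card_sum, Fintype.card_sigma, Fintype.card_coe, hblocks, sum_const, card_univ,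
    Fintype.card_fin, Fintype.card_option, smul_eq_mul] at hcode
  exact hcode

end Arc

end Denniston

/-- Let `1 ≤ n' ≤ n` and `s = 2^{n+n'} - 2^n + 2^{n'}` (the size of a
maximal arc in `PG(2, 2^n)`). Then for every `2 ≤ k ≤ 2^n + 2` there exists a
`k`-server PIR `[m,s]`-code with `m = s + (k-1)·s/2^{n'}`. -/
theorem pir_code_of_maximal_arc (n n' : ℕ) (hn'1 : 1 ≤ n') (hn' : n' ≤ n)
    (s : ℕ) (hs : s = 2 ^ (n + n') - 2 ^ n + 2 ^ n')
    (k : ℕ) (hk2 : 2 ≤ k) (hk : k ≤ 2 ^ n + 2) :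
    ExistsPIRCode s (s + (k - 1) * (s / 2 ^ n')) k := by
  obtain ⟨k, rfl⟩ : ∃ k', k = k' + 1 := ⟨k - 1, by omega⟩
  have : Fact (Nat.Prime 2) := ⟨Nat.prime_two⟩
  let F := GaloisField 2 n
  let : Fintype F := Fintype.ofFinite F
  have hF : Fintype.card F = 2 ^ n := by
    rw [← Nat.card_eq_fintype_card]
    exact GaloisField.card 2 n (by omega)
  obtain ⟨H, hH⟩ := AddSubgroup.exists_card_eq_pow_prime (G := F) 2 (n := n')
    (by rw [Nat.card_eq_fintype_card, hF]; exact pow_dvd_pow 2 hn')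
  obtain ⟨b, hb⟩ := exists_forall_sq_add_ne (F := F)
  have hcard : #(Denniston.arc b H) = s := by
    obtain ⟨c, hc⟩ : ∃ c, 2 ^ n' = c + 1 :=
      ⟨_, (Nat.succ_pred_eq_of_pos (Nat.two_pow_pos n')).symm⟩
    rw [Denniston.card_arc hb, hF, hH, hs, pow_add, hc, mul_add_one, Nat.add_sub_cancel,
      Nat.add_sub_cancel]
    ring
  have hcode := Denniston.existsPIRCode_arc hb H (k := k) (by rw [hF]; omega)
  rw [hcard, hH] at hcode
  simpa using hcode
end

section
/- Every (v_t, b_z)-configuration with z ≥ 2 and t ≥ 1 produces a (t+1)-server PIR [v+b, v]-code. -/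
/-- A `(v_t, b_z)`-configuration: `v` points, `b` lines (subsets of the point set), each
line has `z` points, each point lies on `t` lines, and two distinct points lie on at most
one common line. -/
structure CombConfig (X : Type*) [DecidableEq X] [Fintype X] (v b t z : ℕ) where
  lines : Finset (Finset X)
  card_points : Fintype.card X = v
  card_lines : lines.card = b
  line_size : ∀ l ∈ lines, l.card = z
  point_degree : ∀ x : X, (lines.filter fun l => x ∈ l).card = t
  two_points : ∀ x y : X, x ≠ y → (lines.filter fun l => x ∈ l ∧ y ∈ l).card ≤ 1

/-- A parallel class: a set of lines partitioning the point set. -/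
def IsParallelClass {X : Type*} [DecidableEq X] [Fintype X]
    (lines C : Finset (Finset X)) : Prop :=
  C ⊆ lines ∧ ∀ x : X, ∃! l, l ∈ C ∧ x ∈ l

/-- A resolution: a partition of the set of lines into parallel classes. -/
def IsResolution {X : Type*} [DecidableEq X] [Fintype X]
    (lines : Finset (Finset X)) (R : Finset (Finset (Finset X))) : Prop :=
  (∀ C ∈ R, IsParallelClass lines C ∧ C.Nonempty) ∧ ∀ l ∈ lines, ∃! C, C ∈ R ∧ l ∈ C

open Finset Function

def IsPIRGenerator {ι κ : Type*} [DecidableEq ι] (G : Matrix ι κ (ZMod 2)) (k : ℕ) : Prop :=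
  ∀ i : ι, ∃ R : Fin k → Finset κ,
    (Pairwise fun a b => Disjoint (R a) (R b)) ∧
    ∀ a : Fin k, (∑ j ∈ R a, fun r => G r j) = Pi.single i (1 : ZMod 2)

namespace IsPIRGenerator

variable {ι ι' κ κ' : Type*} [DecidableEq ι] [DecidableEq ι'] {G : Matrix ι κ (ZMod 2)} {k : ℕ}

theorem reindex (h : IsPIRGenerator G k) (e₁ : ι ≃ ι') (e₂ : κ ≃ κ') :
    IsPIRGenerator (Matrix.reindex e₁ e₂ G) k := by
  intro i
  obtain ⟨R, hdisj, hsum⟩ := h (e₁.symm i)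
  refine ⟨fun a => (R a).map e₂.toEmbedding, fun a b hab => (disjoint_map _).mpr (hdisj hab),
    fun a => funext fun r => ?_⟩
  have hr := congrFun (hsum a) (e₁.symm r)
  simp only [Finset.sum_apply, Pi.single_apply, e₁.symm_apply_eq, Equiv.apply_symm_apply] at hr
  simpa [Finset.sum_apply, Pi.single_apply] using hr

theorem existsPIRCode [Fintype ι] [Fintype κ] (h : IsPIRGenerator G k) :
    ExistsPIRCode (Fintype.card ι) (Fintype.card κ) k :=
  ⟨_, h.reindex (Fintype.equivFin ι) (Fintype.equivFin κ)⟩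

end IsPIRGenerator

section PointLineGenerator

variable {X : Type*} [DecidableEq X] (L : Finset (Finset X))

def pointLineColumn : X ⊕ L → X → ZMod 2 :=
  Sum.elim (fun y => Pi.single y 1) fun l => ∑ y ∈ (l : Finset X), Pi.single y 1

def pointLineGenerator : Matrix X (X ⊕ L) (ZMod 2) :=
  Matrix.of fun x j => pointLineColumn L j x

def pointRecoverySet (x : X) : Finset (X ⊕ L) :=
  ({x} : Finset X).disjSum ∅

def lineRecoverySet (x : X) (l : L) : Finset (X ⊕ L) :=
  ((l : Finset X).erase x).disjSum {l}

variable {L}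

theorem sum_pointRecoverySet (x : X) :
    (∑ j ∈ pointRecoverySet L x, fun r => pointLineGenerator L r j) = Pi.single x 1 := by
  rw [pointRecoverySet, sum_disjSum, sum_singleton, sum_empty, add_zero]
  rfl

theorem sum_lineRecoverySet {x : X} {l : L} (hx : x ∈ (l : Finset X)) :
    (∑ j ∈ lineRecoverySet L x l, fun r => pointLineGenerator L r j) = Pi.single x 1 := by
  rw [lineRecoverySet, sum_disjSum, sum_singleton]
  change ∑ y ∈ (l : Finset X).erase x, pointLineColumn L (.inl y) + pointLineColumn L (.inr l) = _
  simp only [pointLineColumn, Sum.elim_inl, Sum.elim_inr]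
  rw [← add_sum_erase _ _ hx, add_left_comm]
  ext r
  simp [CharTwo.add_self_eq_zero]

theorem disjoint_erase_of_card_filter_le_one
    (hlin : ∀ x y : X, x ≠ y → (L.filter fun l => x ∈ l ∧ y ∈ l).card ≤ 1)
    {x : X} {l l' : Finset X} (hl : l ∈ L) (hl' : l' ∈ L) (hne : l ≠ l')
    (hx : x ∈ l) (hx' : x ∈ l') : Disjoint (l.erase x) (l'.erase x) := by
  rw [disjoint_left]
  intro y hy hy'
  rw [mem_erase] at hy hy'
  exact hne (card_le_one.mp (hlin x y (Ne.symm hy.1))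
    l (mem_filter.mpr ⟨hl, hx, hy.2⟩) l' (mem_filter.mpr ⟨hl', hx', hy'.2⟩))

theorem disjoint_lineRecoverySet
    (hlin : ∀ x y : X, x ≠ y → (L.filter fun l => x ∈ l ∧ y ∈ l).card ≤ 1)
    {x : X} {l l' : L} (hne : l ≠ l') (hx : x ∈ (l : Finset X)) (hx' : x ∈ (l' : Finset X)) :
    Disjoint (lineRecoverySet L x l) (lineRecoverySet L x l') := by
  rw [lineRecoverySet, lineRecoverySet, disjoint_left]
  have hpoints := disjoint_erase_of_card_filter_le_one hlin l.2 l'.2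
    (Subtype.coe_injective.ne hne) hx hx'
  rintro (y | m) h h'
  · exact disjoint_left.mp hpoints (inl_mem_disjSum.mp h) (inl_mem_disjSum.mp h')
  · exact hne ((mem_singleton.mp (inr_mem_disjSum.mp h)).symm.trans
      (mem_singleton.mp (inr_mem_disjSum.mp h')))

theorem disjoint_point_lineRecoverySet (x : X) (l : L) :
    Disjoint (pointRecoverySet L x) (lineRecoverySet L x l) := by
  rw [pointRecoverySet, lineRecoverySet, disjoint_left]
  rintro (y | m) h h'
  · rw [inl_mem_disjSum, mem_singleton] at h
    exact (ne_of_mem_erase (inl_mem_disjSum.mp h')) h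
  · simp at h

theorem exists_injective_lines_through {x : X} {t : ℕ}
    (hdeg : t ≤ (L.filter (x ∈ ·)).card) :
    ∃ f : Fin t → L, Injective f ∧ ∀ a, x ∈ (f a : Finset X) := by
  obtain ⟨S, hS, hcard⟩ := exists_subset_card_eq hdeg
  let e := S.equivFinOfCardEq hcard
  refine ⟨fun a => ⟨e.symm a, (mem_filter.mp (hS (e.symm a).2)).1⟩,
    fun a b h => e.symm.injective (Subtype.ext (congrArg Subtype.val h :)),
    fun a => (mem_filter.mp (hS (e.symm a).2)).2⟩

theorem isPIRGenerator_pointLineGenerator {t : ℕ}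
    (hdeg : ∀ x : X, t ≤ (L.filter (x ∈ ·)).card)
    (hlin : ∀ x y : X, x ≠ y → (L.filter fun l => x ∈ l ∧ y ∈ l).card ≤ 1) :
    IsPIRGenerator (pointLineGenerator L) (t + 1) := by
  intro x
  obtain ⟨f, hf, hxf⟩ := exists_injective_lines_through (hdeg x)
  refine ⟨Fin.cons (pointRecoverySet L x) fun a => lineRecoverySet L x (f a),
    pairwise_fin_succ_iff.mpr ⟨fun a => (disjoint_point_lineRecoverySet x (f a)).symm,
      fun a => disjoint_point_lineRecoverySet x (f a),
      fun a b hab => disjoint_lineRecoverySet hlin (hf.ne hab) (hxf a) (hxf b)⟩,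
    Fin.cases (sum_pointRecoverySet x) fun a => sum_lineRecoverySet (hxf a)⟩

end PointLineGenerator

theorem pir_code_of_configuration_general {X : Type*} [DecidableEq X] [Fintype X]
    (v b t z : ℕ) (cfg : CombConfig X v b t z) :
    ExistsPIRCode v (v + b) (t + 1) := by
  have h := (isPIRGenerator_pointLineGenerator (fun x => (cfg.point_degree x).ge)
    cfg.two_points).existsPIRCode
  rwa [Fintype.card_sum, Fintype.card_coe, cfg.card_points, cfg.card_lines] at h

/-- Every `(v_t, b_z)`-configuration with `z ≥ 2` and `t ≥ 1`
produces a `(t+1)`-server PIR `[v+b, v]`-code. -/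
theorem pir_code_of_configuration {X : Type*} [DecidableEq X] [Fintype X]
    (v b t z : ℕ) (cfg : CombConfig X v b t z) (hz : 2 ≤ z) (ht : 1 ≤ t) :
    ExistsPIRCode v (v + b) (t + 1) :=
  pir_code_of_configuration_general v b t z cfg
end
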